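/- arXiv:2410.20195 — 4 statements merged into one kernel-verified Lean document; each statement's English description precedes it below -/
import Mathlib

section
/- Let H be a Hilbert space and V : H → H a linear isometry. Suppose (V_t)_{t ≥ 0} is a strongly continuous semigroup of contractions on H with V_1 = V. Then V_t is an isometry for every t ≥ 0. -/
open scoped NNReal

/-- If an isometry `V` on a Hilbert space embeds as `V = T 1` into a strongly
continuous semigroup of contractions `(T t)`, then every `T t` is an isometry. -/
theorem stmt0 {H : Type*} [NormedAddCommGroup H] [InnerProductSpace ℂ H] [CompleteSpace H]
    (T : ℝ≥0 → H →L[ℂ] H)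
    (hT0 : T 0 = 1)
    (hTadd : ∀ s t : ℝ≥0, T (s + t) = (T s).comp (T t))
    (hTcont : ∀ x : H, Continuous fun t : ℝ≥0 => T t x)
    (hcontr : ∀ t : ℝ≥0, ‖T t‖ ≤ 1)
    (hiso : ∀ x : H, ‖T 1 x‖ = ‖x‖) :
    ∀ (t : ℝ≥0) (x : H), ‖T t x‖ = ‖x‖ := by
  have hnat : ∀ n : ℕ, ∀ x : H, ‖T n x‖ = ‖x‖ := by
    intro n
    induction n with
    | zero => intro x; simp [hT0]
    | succ n ih =>
      intro x
      have : ((n + 1 : ℕ) : ℝ≥0) = (n : ℝ≥0) + 1 := by push_cast; ring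
      rw [this, hTadd]
      simp only [ContinuousLinearMap.comp_apply]
      rw [ih, hiso]
  intro t x
  have hle : ∀ (s : ℝ≥0) (y : H), ‖T s y‖ ≤ ‖y‖ := fun s y =>
    le_trans ((T s).le_opNorm y) (by
      calc ‖T s‖ * ‖y‖ ≤ 1 * ‖y‖ := by gcongr; exact hcontr s
        _ = ‖y‖ := one_mul _)
  refine le_antisymm (hle t x) ?_
  set n : ℕ := ⌈(t : ℝ)⌉₊ with hn
  have htn : t ≤ (n : ℝ≥0) := by
    rw [← NNReal.coe_le_coe]
    exact_mod_cast Nat.le_ceil (t : ℝ)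
  have hsplit : ((n : ℝ≥0) - t) + t = (n : ℝ≥0) := tsub_add_cancel_of_le htn
  calc ‖x‖ = ‖T n x‖ := (hnat n x).symm
    _ = ‖T ((n : ℝ≥0) - t) (T t x)‖ := by
        have h := hTadd ((n : ℝ≥0) - t) t
        rw [hsplit] at h
        rw [h]; rfl
    _ ≤ ‖T t x‖ := hle _ _
end

section
/- Let (φ_t)_{t ≥ 0} be a semiflow of analytic self-maps of the unit disc 𝔻 (i.e., φ_0 = id, φ_{t+s} = φ_t ∘ φ_s, and t ↦ φ_t(z) continuous for each z). Then each φ_t is injective on 𝔻. -/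
open Complex Metric Set Filter Topology
open scoped NNReal

/-!
Suppose `φ t x = φ t y` with `x ≠ y`, and let `t₀ > 0` be the first time at which the orbits of
`x` and `y` meet, at `w = φ t₀ x`. For small `s > 0` the points `φ (t₀ - s) x ≠ φ (t₀ - s) y`
lie near `w` and are identified by `φ s`. But the Schwarz lemma makes the maps `φ t` uniformly
Lipschitz on compact subsets of the disc, so `t ↦ φ t` is jointly continuous and `φ s → id`
uniformly near `w`; applied once more to `φ s - id`, the Schwarz lemma shows that a holomorphic map
this close to the identity is injective near `w`.
-/

theorem eq_of_apply_eq_of_dist_apply_self_lt {f : ℂ → ℂ} {a b : ℂ} {r : ℝ}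
    (hf : DifferentiableOn ℂ f (ball a r)) (hmove : ∀ z ∈ ball a r, dist (f z) z < r / 4)
    (hb : b ∈ ball a r) (hfb : f b = f a) : b = a := by
  have hr : 0 < r := nonempty_ball.mp ⟨b, hb⟩
  set g : ℂ → ℂ := fun z => f z - z
  have hg : MapsTo g (ball a r) (closedBall (g a) (r / 2)) := fun z hz => by
    have hz' := hmove z hz
    have ha' := hmove a (mem_ball_self hr)
    rw [dist_eq_norm] at hz' ha'
    rw [mem_closedBall, dist_eq_norm]
    calc ‖(f z - z) - (f a - a)‖ ≤ ‖f z - z‖ + ‖f a - a‖ := norm_sub_le _ _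
      _ ≤ r / 2 := by linarith
  have hschwarz : dist (g b) (g a) ≤ r / 2 / r * dist b a :=
    dist_le_div_mul_dist_of_mapsTo_ball (hf.sub differentiableOn_id) hg hb
  have hgba : dist (g b) (g a) = dist b a := by
    rw [dist_eq_norm, dist_eq_norm, ← norm_neg]
    simp only [g, hfb]
    ring_nf
  rw [hgba, show r / 2 / r = 1 / 2 by field_simp] at hschwarz
  exact dist_le_zero.1 (by linarith [dist_nonneg (x := b) (y := a)])

theorem injOn_ball_of_dist_apply_self_lt {f : ℂ → ℂ} {c : ℂ} {r : ℝ}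
    (hf : DifferentiableOn ℂ f (ball c r)) (hmove : ∀ z ∈ ball c r, dist (f z) z < r / 8) :
    InjOn f (ball c (r / 4)) := by
  intro x hx y hy hxy
  have hsub : ball x (r / 2) ⊆ ball c r :=
    ball_subset_ball' (by linarith [mem_ball.1 hx, dist_nonneg (x := x) (y := c)])
  have hyx : y ∈ ball x (r / 2) := by
    rw [mem_ball]
    linarith [dist_triangle y c x, mem_ball.1 hy, mem_ball'.1 hx]
  refine (eq_of_apply_eq_of_dist_apply_self_lt (hf.mono hsub) (fun z hz => ?_) hyx hxy.symm).symm
  linarith [hmove z (hsub hz)]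

theorem eventually_injOn_ball_of_tendstoUniformlyOn_id {ι : Type*} {l : Filter ι}
    {F : ι → ℂ → ℂ} {c : ℂ} {r : ℝ} (hr : 0 < r)
    (hF : ∀ i, DifferentiableOn ℂ (F i) (ball c r)) (hlim : TendstoUniformlyOn F id l (ball c r)) :
    ∀ᶠ i in l, InjOn (F i) (ball c (r / 4)) := by
  filter_upwards [Metric.tendstoUniformlyOn_iff.1 hlim (r / 8) (by positivity)] with i hi
  exact injOn_ball_of_dist_apply_self_lt (hF i) fun z hz => by
    simpa only [dist_comm, id] using hi z hz

theorem lipschitzOnWith_closedBall_of_mapsTo_unitBall {f : ℂ → ℂ} {w : ℂ} {r : ℝ} (hr : 0 < r)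
    (hf : DifferentiableOn ℂ f (ball w (4 * r)))
    (hmaps : MapsTo f (ball w (4 * r)) (ball 0 1)) :
    LipschitzOnWith (2 / (3 * r)).toNNReal f (closedBall w r) := by
  refine LipschitzOnWith.of_dist_le_mul fun z hz c hc => ?_
  have hsub : ball c (3 * r) ⊆ ball w (4 * r) :=
    ball_subset_ball' (by linarith [mem_closedBall.1 hc])
  have hdiam : MapsTo f (ball c (3 * r)) (closedBall (f c) 2) := fun u hu => by
    have hfu := mem_ball_zero_iff.1 (hmaps (hsub hu))
    have hfc := mem_ball_zero_iff.1 (hmaps (hsub (mem_ball_self (by positivity))))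
    rw [mem_closedBall, dist_eq_norm]
    linarith [norm_sub_le (f u) (f c)]
  have hzc : z ∈ ball c (3 * r) := by
    rw [mem_ball]
    linarith [dist_triangle z w c, mem_closedBall.1 hz, mem_closedBall'.1 hc]
  rw [Real.coe_toNNReal _ (by positivity)]
  exact dist_le_div_mul_dist_of_mapsTo_ball (hf.mono hsub) hdiam hzc

theorem continuousOn_uncurry_of_mapsTo_unitBall {X : Type*} [TopologicalSpace X]
    {φ : X → ℂ → ℂ} (hanal : ∀ t, DifferentiableOn ℂ (φ t) (ball 0 1))
    (hmaps : ∀ t, MapsTo (φ t) (ball 0 1) (ball 0 1))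
    (hcont : ∀ z ∈ ball (0 : ℂ) 1, Continuous fun t => φ t z) :
    ContinuousOn (Function.uncurry φ) (univ ×ˢ ball 0 1) := by
  rintro ⟨t, w⟩ ⟨-, hw⟩
  obtain ⟨ε, hε, hsub⟩ := Metric.isOpen_iff.1 isOpen_ball w hw
  have hsub' : ball w (4 * (ε / 4)) ⊆ ball 0 1 := by rwa [mul_div_cancel₀ _ four_ne_zero]
  have hK : ContinuousOn (Function.uncurry φ) (univ ×ˢ closedBall w (ε / 4)) :=
    continuousOn_prod_of_continuousOn_lipschitzOnWith' _ _
      (fun t _ => lipschitzOnWith_closedBall_of_mapsTo_unitBall (by positivity)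
        ((hanal t).mono hsub') ((hmaps t).mono_left hsub'))
      (fun z hz => (hcont z (hsub' (closedBall_subset_ball (by linarith) hz))).continuousOn)
  exact (hK.continuousAt (prod_mem_nhds univ_mem
    (closedBall_mem_nhds w (by positivity)))).continuousWithinAt

theorem IsCompact.tendstoUniformlyOn_of_continuousOn_uncurry {X Y E : Type*}
    [TopologicalSpace X] [TopologicalSpace Y] [UniformSpace E] {f : X → Y → E} {k : Set Y}
    (hk : IsCompact k) (hf : ContinuousOn (Function.uncurry f) (univ ×ˢ k)) (q : X) :
    TendstoUniformlyOn f (f q) (𝓝 q) k := by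
  intro u hu
  obtain ⟨v, hv, hvu⟩ := hk.mem_uniformity_of_prod hf (mem_univ q) (symm_le_uniformity hu)
  rw [nhdsWithin_univ] at hv
  filter_upwards [hv] with p hp x hx using hvu p hp x hx

theorem exists_mem_nhds_eventually_injOn_of_mapsTo_unitBall {X : Type*} [TopologicalSpace X]
    {φ : X → ℂ → ℂ} {q : X} (hanal : ∀ t, DifferentiableOn ℂ (φ t) (ball 0 1))
    (hmaps : ∀ t, MapsTo (φ t) (ball 0 1) (ball 0 1)) (hq : ∀ z ∈ ball (0 : ℂ) 1, φ q z = z)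
    (hcont : ∀ z ∈ ball (0 : ℂ) 1, Continuous fun t => φ t z) {w : ℂ}
    (hw : w ∈ ball (0 : ℂ) 1) :
    ∃ U ∈ 𝓝 w, ∀ᶠ t in 𝓝 q, InjOn (φ t) U := by
  obtain ⟨r, hr, hK⟩ := nhds_basis_closedBall.mem_iff.1 (isOpen_ball.mem_nhds hw)
  have hjoint : ContinuousOn (Function.uncurry φ) (univ ×ˢ closedBall w r) :=
    (continuousOn_uncurry_of_mapsTo_unitBall hanal hmaps hcont).mono (prod_mono subset_rfl hK)
  have hlim : TendstoUniformlyOn φ id (𝓝 q) (closedBall w r) :=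
    ((isCompact_closedBall w r).tendstoUniformlyOn_of_continuousOn_uncurry hjoint q).congr_right
      fun z hz => hq z (hK hz)
  exact ⟨ball w (r / 4), ball_mem_nhds w (by positivity),
    eventually_injOn_ball_of_tendstoUniformlyOn_id hr
      (fun t => (hanal t).mono (ball_subset_closedBall.trans hK))
      (hlim.mono ball_subset_closedBall)⟩

theorem injOn_of_semiflow_of_eventually_injOn {X : Type*} [TopologicalSpace X] [T2Space X]
    {D : Set X} {φ : ℝ≥0 → X → X} (hmaps : ∀ t, MapsTo (φ t) D D) (h0 : ∀ z ∈ D, φ 0 z = z)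
    (hadd : ∀ s t : ℝ≥0, ∀ z ∈ D, φ (s + t) z = φ s (φ t z))
    (hcont : ∀ z ∈ D, Continuous fun t => φ t z)
    (hloc : ∀ w ∈ D, ∃ U ∈ 𝓝 w, ∀ᶠ s in 𝓝 0, InjOn (φ s) U) (t : ℝ≥0) :
    InjOn (φ t) D := by
  intro x hx y hy hxy
  by_contra hne
  set S := {s : ℝ≥0 | φ s x = φ s y}
  set t₀ := sInf S
  have ht₀S : t₀ ∈ S :=
    (isClosed_eq (hcont x hx) (hcont y hy)).csInf_mem ⟨t, hxy⟩ (OrderBot.bddBelow S)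
  have ht₀pos : 0 < t₀ := pos_iff_ne_zero.2 fun h => hne <| by
    simpa only [S, mem_ofPred_eq, h, h0 x hx, h0 y hy] using ht₀S
  obtain ⟨U, hU, hinj⟩ := hloc (φ t₀ x) (hmaps t₀ hx)
  have hback : ∀ z ∈ D, Tendsto (fun s => φ (t₀ - s) z) (𝓝 0) (𝓝 (φ t₀ z)) := fun z hz =>
    ((hcont z hz).tendsto t₀).comp (by simpa using (continuous_sub_left t₀).tendsto 0)
  have hxU := (hback x hx).eventually hU
  have hyU : ∀ᶠ s in 𝓝 0, φ (t₀ - s) y ∈ U := (hback y hy).eventually (ht₀S ▸ hU)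
  have hnear := (eventually_le_nhds ht₀pos).and (hinj.and (hxU.and hyU))
  obtain ⟨s, hs, hs_le, hs_inj, hxs, hys⟩ :=
    ((eventually_mem_nhdsWithin (a := (0 : ℝ≥0)) (s := Ioi 0)).and
      (hnear.filter_mono nhdsWithin_le_nhds)).exists
  have hstep : ∀ z ∈ D, φ s (φ (t₀ - s) z) = φ t₀ z := fun z hz => by
    rw [← hadd s _ z hz, add_tsub_cancel_of_le hs_le]
  have hmem : t₀ - s ∈ S := hs_inj hxs hys (by rw [hstep x hx, hstep y hy]; exact ht₀S)
  exact (csInf_le (OrderBot.bddBelow S) hmem).not_gt (tsub_lt_self ht₀pos hs)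

/-- Each map of a semiflow of analytic self-maps of the unit disc is injective on the disc. -/
theorem stmt4 (φ : ℝ≥0 → ℂ → ℂ)
    (hanal : ∀ t, DifferentiableOn ℂ (φ t) (ball (0:ℂ) 1))
    (hmaps : ∀ t, Set.MapsTo (φ t) (ball (0:ℂ) 1) (ball (0:ℂ) 1))
    (h0 : ∀ z ∈ ball (0:ℂ) 1, φ 0 z = z)
    (hadd : ∀ s t : ℝ≥0, ∀ z ∈ ball (0:ℂ) 1, φ (s + t) z = φ s (φ t z))
    (hcont : ∀ z ∈ ball (0:ℂ) 1, Continuous fun t : ℝ≥0 => φ t z) :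
    ∀ t : ℝ≥0, Set.InjOn (φ t) (ball (0:ℂ) 1) :=
  injOn_of_semiflow_of_eventually_injOn hmaps h0 hadd hcont fun _ hw =>
    exists_mem_nhds_eventually_injOn_of_mapsTo_unitBall hanal hmaps h0 hcont hw
end

section
/- Let ψ be an inner function with ψ(0) = 0 which is not an automorphism (equivalently 0 is the Denjoy–Wolff point and ψ^{[n]}(z) → 0 for each z ∈ 𝔻). Then ⋂_{n ≥ 0} C_ψ^n H²₀ = {0}, where H²₀ = {f ∈ H² : f(0) = 0} and C_ψ f = f ∘ ψ. -/
/-!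
`C_ψ` is an isometry. For a polynomial `p`, the circle mean of `|p ∘ ψ|²` at radius `r` is a
combination of the circle means of `ψ ^ m * conj ψ ^ n`. For `n ≤ m` this function equals
`ψ ^ (m - n) * |ψ| ^ (2 * n)`, so by the mean value property and dominated convergence
(`|ψ| → 1` radially a.e.) its mean tends to `ψ(0) ^ (m - n) = δ_{mn}` as `r → 1⁻`. By Parseval
the circle means of `|f|²` tend to `‖f‖²` for every `f ∈ H²`, so `‖C_ψ p‖ = ‖p‖`, and
polynomials are dense.

If `g = C_ψ^n f` with `f(0) = 0`, then `‖f‖ = ‖g‖` and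
`|g(z)| = |f(ψ^[n] z)| ≤ ‖g‖ |ψ^[n] z| / (1 - |ψ^[n] z|) → 0`, so `g` vanishes on the disc,
hence its circle means vanish and `g = 0`.
-/

open Complex Metric Filter MeasureTheory Set
open scoped NNReal ENNReal Topology

noncomputable section

/-- The Hardy space `H²`, modelled as the space of square-summable Taylor
coefficient sequences, i.e. `ℓ²(ℕ, ℂ)` with its Hilbert space structure. -/
abbrev H2 : Type := lp (fun _ : ℕ => ℂ) 2

/-- Evaluation of an element of `H²` at a point of the unit disc, via its power series. -/
noncomputable def evalH2 (f : H2) (z : ℂ) : ℂ := ∑' n : ℕ, f n * z ^ n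

/-- The reproducing kernel of `H²` at `w ∈ 𝔻` (junk value `0` if `‖w‖ ≥ 1`). -/
noncomputable def kern (w : ℂ) : H2 :=
  if h : ‖w‖ < 1 then
    ⟨fun n => (starRingEnd ℂ) w ^ n, by
      apply memℓp_gen
      have h2 : ‖w‖ ^ 2 < 1 := by nlinarith [norm_nonneg w]
      have hs : Summable fun n : ℕ => (‖w‖ ^ 2) ^ n :=
        summable_geometric_of_lt_one (by positivity) h2
      convert hs using 2 with n
      rw [show ((2:ℝ≥0∞).toReal) = (2:ℝ) by simp]
      rw [norm_pow, RCLike.norm_conj, Real.rpow_two]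
      ring⟩
  else 0

/-- `φ` is an inner function: its radial boundary values have modulus `1`
for almost every boundary angle. -/
def IsInnerFn (φ : ℂ → ℂ) : Prop :=
  ∀ᵐ θ : ℝ, Filter.Tendsto
    (fun r : ℝ => ‖φ ((r : ℂ) * Complex.exp ((θ : ℂ) * Complex.I))‖)
    (nhdsWithin 1 (Set.Iio 1)) (nhds 1)

open Real ComplexConjugate

namespace H2

lemma hasSum_norm_sq (f : H2) : HasSum (fun k => ‖f k‖ ^ 2) (‖f‖ ^ 2) := by
  have h := lp.hasSum_norm (p := 2) (by norm_num) f
  rw [show (2 : ℝ≥0∞).toReal = ((2 : ℕ) : ℝ) by norm_num] at h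
  simpa only [Real.rpow_natCast] using h

lemma summable_norm_mul_pow (f : H2) {w : ℂ} (hw : ‖w‖ < 1) :
    Summable fun n => ‖f n‖ * ‖w‖ ^ n :=
  .of_nonneg_of_le (fun n => by positivity)
    (fun n => mul_le_mul_of_nonneg_right (lp.norm_apply_le_norm two_ne_zero f n) (by positivity))
    ((summable_geometric_of_lt_one (norm_nonneg w) hw).mul_left _)

lemma hasSum_evalH2 (f : H2) {w : ℂ} (hw : ‖w‖ < 1) :
    HasSum (fun n => f n * w ^ n) (evalH2 f w) :=
  (Summable.of_norm <| by simpa using summable_norm_mul_pow f hw).hasSum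

@[simp]
lemma evalH2_zero (f : H2) : evalH2 f 0 = f 0 := by
  rw [evalH2, tsum_eq_single 0 fun n hn => by simp [zero_pow hn]]
  simp

lemma norm_evalH2_sub_le (f : H2) {w : ℂ} (hw : ‖w‖ < 1) :
    ‖evalH2 f w - f 0‖ ≤ ‖f‖ * ‖w‖ / (1 - ‖w‖) := by
  have hsum := (hasSum_nat_add_iff' 1).2 (hasSum_evalH2 f hw)
  have hgeom : HasSum (fun n : ℕ => ‖f‖ * ‖w‖ * ‖w‖ ^ n) (‖f‖ * ‖w‖ / (1 - ‖w‖)) := by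
    simpa [div_eq_mul_inv] using (hasSum_geometric_of_lt_one (norm_nonneg w) hw).mul_left _
  refine HasSum.norm_le_of_bounded (by simpa using hsum) hgeom fun n => ?_
  rw [norm_mul, norm_pow, pow_succ']
  calc ‖f (n + 1)‖ * (‖w‖ * ‖w‖ ^ n) ≤ ‖f‖ * (‖w‖ * ‖w‖ ^ n) :=
        mul_le_mul_of_nonneg_right (lp.norm_apply_le_norm two_ne_zero f _) (by positivity)
    _ = ‖f‖ * ‖w‖ * ‖w‖ ^ n := by ring

lemma evalH2_eq_sum_of_coeff_eq_zero {p : H2} {N : ℕ} (hp : ∀ m, N ≤ m → p m = 0) (w : ℂ) :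
    evalH2 p w = ∑ m ∈ Finset.range N, p m * w ^ m :=
  tsum_eq_sum fun m hm => by simp [hp m (by simpa using hm)]

lemma norm_sq_eq_sum_of_coeff_eq_zero {p : H2} {N : ℕ} (hp : ∀ m, N ≤ m → p m = 0) :
    ‖p‖ ^ 2 = ∑ m ∈ Finset.range N, ‖p m‖ ^ 2 :=
  (hasSum_norm_sq p).unique <| hasSum_sum_of_ne_finset_zero (s := Finset.range N)
    fun m hm => by simp [hp m (by simpa using hm)]

end H2

section CircleAverage

lemma circleAverage_conj (f : ℂ → ℂ) (c : ℂ) (R : ℝ) :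
    circleAverage (fun z => conj (f z)) c R = conj (circleAverage f c R) := by
  simp only [circleAverage_def, intervalIntegral.integral_of_le two_pi_pos.le, integral_conj,
    Complex.real_smul, map_mul, Complex.conj_ofReal]

lemma hasSum_circleAverage {ι E : Type*} [Countable ι] [NormedAddCommGroup E] [NormedSpace ℝ E]
    {F : ι → ℂ → E} {G : ℂ → E} {u : ι → ℝ} {c : ℂ} {R : ℝ}
    (hF : ∀ i, CircleIntegrable (F i) c R) (hu : Summable u)
    (hFu : ∀ i, ∀ z ∈ sphere c |R|, ‖F i z‖ ≤ u i)
    (hFG : ∀ z ∈ sphere c |R|, HasSum (fun i => F i z) (G z)) :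
    HasSum (fun i => circleAverage (F i) c R) (circleAverage G c R) := by
  simp only [circleAverage_def]
  refine HasSum.const_smul _ <| intervalIntegral.hasSum_integral_of_dominated_convergence
    (fun i _ => u i) (fun i => (hF i).def'.aestronglyMeasurable) (fun i => ?_)
    (.of_forall fun _ _ => hu) intervalIntegrable_const
    (.of_forall fun θ _ => hFG _ (circleMap_mem_sphere' c R θ))
  exact .of_forall fun θ _ => hFu i _ (circleMap_mem_sphere' c R θ)

lemma pow_mul_conj_pow_of_le {m n : ℕ} (hnm : n ≤ m) (w : ℂ) :
    w ^ m * conj w ^ n = w ^ (m - n) * ((‖w‖ ^ (2 * n) : ℝ) : ℂ) := by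
  rw [← Nat.sub_add_cancel hnm, pow_add, Nat.add_sub_cancel, mul_assoc, ← mul_pow,
    Complex.mul_conj', pow_mul]
  push_cast
  ring

lemma norm_pow_mul_ofReal_pow_sub_one_le {w : ℂ} (hw : ‖w‖ ≤ 1) (d k : ℕ) :
    ‖w ^ d * (((‖w‖ ^ k : ℝ) : ℂ) - 1)‖ ≤ 1 - ‖w‖ ^ k := by
  have hk : ‖w‖ ^ k ≤ 1 := pow_le_one₀ (norm_nonneg _) hw
  rw [norm_mul, norm_pow, ← Complex.ofReal_one, ← Complex.ofReal_sub, Complex.norm_real,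
    Real.norm_of_nonpos (by linarith), neg_sub]
  exact mul_le_of_le_one_left (by linarith) (pow_le_one₀ (norm_nonneg _) hw)

lemma circleAverage_pow_mul_conj_pow_of_le {m n : ℕ} (hnm : n ≤ m) (r : ℝ) :
    circleAverage (fun z => z ^ m * conj z ^ n) 0 r = if m = n then (r : ℂ) ^ (2 * n) else 0 := by
  have hsphere : EqOn (fun z : ℂ => z ^ m * conj z ^ n)
      (fun z => ((|r| ^ (2 * n) : ℝ) : ℂ) • z ^ (m - n)) (sphere 0 |r|) := fun z hz => by
    simp only [pow_mul_conj_pow_of_le hnm, mem_sphere_zero_iff_norm.1 hz, smul_eq_mul,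
      mul_comm]
  rw [circleAverage_congr_sphere hsphere, circleAverage_fun_smul,
    ((differentiable_id.pow _).diffContOnCl (s := ball 0 |r|)).circleAverage]
  split_ifs with h
  · simp [h, pow_mul]
  · simp [Nat.sub_ne_zero_of_lt (lt_of_le_of_ne hnm (Ne.symm h))]

lemma circleAverage_pow_mul_conj_pow (m n : ℕ) (r : ℝ) :
    circleAverage (fun z => z ^ m * conj z ^ n) 0 r = if m = n then (r : ℂ) ^ (2 * n) else 0 := by
  rcases le_total n m with hnm | hmn
  · exact circleAverage_pow_mul_conj_pow_of_le hnm r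
  · have h := congrArg conj (circleAverage_pow_mul_conj_pow_of_le hmn r)
    rw [← circleAverage_conj] at h
    simp only [map_mul, map_pow, Complex.conj_conj] at h
    simp only [mul_comm (conj _ ^ n)] at h
    rw [h]
    by_cases h' : m = n
    · subst h'; simp
    · simp [h', Ne.symm h']

lemma sphere_subset_ball_one {r : ℝ} (hr : r ∈ Ioo 0 1) : sphere (0 : ℂ) |r| ⊆ ball 0 1 :=
  sphere_subset_ball (by rw [abs_of_pos hr.1]; exact hr.2)

end CircleAverage

namespace H2

lemma hasSum_circleAverage_evalH2_mul_conj (f : H2) {r : ℝ} (hr : |r| < 1) :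
    HasSum (fun k => ((‖f k‖ ^ 2 * r ^ (2 * k) : ℝ) : ℂ))
      (circleAverage (fun z => evalH2 f z * conj (evalH2 f z)) 0 r) := by
  set a : ℕ → ℝ := fun k => ‖f k‖ * |r| ^ k
  have ha : Summable a := by
    simpa using summable_norm_mul_pow f (w := r) (by simpa using hr)
  have hprod : Summable fun p : ℕ × ℕ => a p.1 * a p.2 :=
    ha.mul_of_nonneg ha (fun k => by positivity) (fun k => by positivity)
  set F : ℕ × ℕ → ℂ → ℂ := fun p z => (f p.1 * z ^ p.1) * conj (f p.2 * z ^ p.2)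
  have hFa : ∀ p, ∀ z ∈ sphere (0 : ℂ) |r|, ‖F p z‖ = a p.1 * a p.2 := fun p z hz => by
    simp [F, a, mem_sphere_zero_iff_norm.1 hz]
  have hF : HasSum (fun p => circleAverage (F p) 0 r)
      (circleAverage (fun z => evalH2 f z * conj (evalH2 f z)) 0 r) := by
    refine hasSum_circleAverage (fun p => ?_) hprod (fun p z hz => (hFa p z hz).le) fun z hz => ?_
    · exact (by fun_prop : Continuous (F p)).continuousOn.circleIntegrable'
    · have hz' : ‖z‖ < 1 := by rwa [mem_sphere_zero_iff_norm.1 hz]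
      have hconj := Complex.hasSum_conj'.2 (hasSum_evalH2 f hz')
      exact HasSum.mul (f := fun n => f n * z ^ n) (g := fun n => conj (f n * z ^ n))
        (hasSum_evalH2 f hz') hconj (.of_norm_bounded hprod fun p => (hFa p z hz).le)
  have hFdiag : ∀ p : ℕ × ℕ, circleAverage (F p) 0 r =
      if p.1 = p.2 then ((‖f p.1‖ ^ 2 * r ^ (2 * p.1) : ℝ) : ℂ) else 0 := fun ⟨m, n⟩ => by
    have hF' : F (m, n) = fun z => (f m * conj (f n)) • (z ^ m * conj z ^ n) := by
      ext z; simp only [F, map_mul, map_pow, smul_eq_mul]; ring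
    rw [hF', circleAverage_fun_smul, circleAverage_pow_mul_conj_pow]
    split_ifs with h
    · subst h; push_cast; rw [Complex.mul_conj', smul_eq_mul]
    · simp
  rw [funext hFdiag] at hF
  refine (Function.Injective.hasSum_iff (g := fun k => (k, k)) (fun _ _ h => congrArg Prod.fst h)
    fun p hp => if_neg fun h => hp ⟨p.1, Prod.ext rfl h⟩).2 hF |>.congr_fun fun k => ?_
  simp


lemma tendsto_circleAverage_evalH2_mul_conj (f : H2) :
    Tendsto (fun r => circleAverage (fun z => evalH2 f z * conj (evalH2 f z)) 0 r)
      (𝓝[<] 1) (𝓝 ((‖f‖ ^ 2 : ℝ) : ℂ)) := by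
  have habel : Tendsto (fun r : ℝ => ∑' k, ((‖f k‖ ^ 2 * r ^ (2 * k) : ℝ) : ℂ)) (𝓝[<] 1)
      (𝓝 (∑' k, ((‖f k‖ ^ 2 : ℝ) : ℂ))) := by
    refine tendsto_tsum_of_dominated_convergence (hasSum_norm_sq f).summable (fun k => ?_) ?_
    · have : Continuous fun r : ℝ => ((‖f k‖ ^ 2 * r ^ (2 * k) : ℝ) : ℂ) := by fun_prop
      simpa using (this.tendsto 1).mono_left nhdsWithin_le_nhds
    · filter_upwards [Ioo_mem_nhdsLT one_pos] with r hr k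
      rw [Complex.norm_real, Real.norm_of_nonneg (by have := hr.1; positivity)]
      exact mul_le_of_le_one_right (by positivity) (pow_le_one₀ hr.1.le hr.2.le)
  rw [(Complex.hasSum_ofReal.2 (hasSum_norm_sq f)).tsum_eq] at habel
  refine habel.congr' ?_
  filter_upwards [Ioo_mem_nhdsLT one_pos] with r hr
  exact (hasSum_circleAverage_evalH2_mul_conj f (by rw [abs_of_pos hr.1]; exact hr.2)).tsum_eq

lemma eq_zero_of_evalH2_eq_zero {f : H2} (hf : ∀ z ∈ ball (0 : ℂ) 1, evalH2 f z = 0) :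
    f = 0 := by
  have hzero : (fun r => circleAverage (fun z => evalH2 f z * conj (evalH2 f z)) 0 r)
      =ᶠ[𝓝[<] 1] fun _ => (0 : ℂ) := by
    filter_upwards [Ioo_mem_nhdsLT one_pos] with r hr
    refine circleAverage_const_on_circle fun z hz => ?_
    simp [hf z (sphere_subset_ball_one hr hz)]
  have h := tendsto_nhds_unique (tendsto_circleAverage_evalH2_mul_conj f)
    (tendsto_const_nhds.congr' hzero.symm)
  simpa using h

end H2

section CompositionOperator

variable {ψ : ℂ → ℂ} {T : H2 →L[ℂ] H2}
  (hT : ∀ f : H2, ∀ z ∈ ball (0 : ℂ) 1, evalH2 (T f) z = evalH2 f (ψ z))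
include hT

lemma evalH2_pow_apply (hmaps : MapsTo ψ (ball 0 1) (ball 0 1)) (n : ℕ) (f : H2) {z : ℂ}
    (hz : z ∈ ball (0 : ℂ) 1) : evalH2 ((T ^ n) f) z = evalH2 f (ψ^[n] z) := by
  induction n generalizing f with
  | zero => rfl
  | succ n ih =>
    rw [pow_succ, Function.iterate_succ_apply', ← hT f _ (hmaps.iterate n hz)]
    exact ih (T f)

lemma norm_evalH2_pow_apply_le (hmaps : MapsTo ψ (ball 0 1) (ball 0 1)) {n : ℕ} {f : H2}
    (hf : evalH2 f 0 = 0) {z : ℂ} (hz : z ∈ ball (0 : ℂ) 1) :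
    ‖evalH2 ((T ^ n) f) z‖ ≤ ‖f‖ * ‖ψ^[n] z‖ / (1 - ‖ψ^[n] z‖) := by
  have h := H2.norm_evalH2_sub_le f (mem_ball_zero_iff.1 (hmaps.iterate n hz))
  rwa [← H2.evalH2_zero, hf, sub_zero, ← evalH2_pow_apply hT hmaps n f hz] at h

lemma circleAverage_evalH2_apply_mul_conj_eq_sum (hψ : ContinuousOn ψ (ball 0 1)) {p : H2}
    {N : ℕ} (hp : ∀ m, N ≤ m → p m = 0) {r : ℝ} (hr : r ∈ Ioo 0 1) :
    circleAverage (fun z => evalH2 (T p) z * conj (evalH2 (T p) z)) 0 r =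
      ∑ m ∈ Finset.range N, ∑ n ∈ Finset.range N,
        p m * conj (p n) * circleAverage (fun z => ψ z ^ m * conj (ψ z) ^ n) 0 r := by
  have hψ' : ContinuousOn ψ (sphere 0 |r|) := hψ.mono (sphere_subset_ball_one hr)
  have hsphere : EqOn (fun z => evalH2 (T p) z * conj (evalH2 (T p) z))
      (fun z => ∑ m ∈ Finset.range N, ∑ n ∈ Finset.range N,
        (p m * conj (p n)) • (ψ z ^ m * conj (ψ z) ^ n)) (sphere 0 |r|) := fun z hz => by
    simp only [hT p z (sphere_subset_ball_one hr hz), H2.evalH2_eq_sum_of_coeff_eq_zero hp,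
      map_sum, Finset.sum_mul_sum, map_mul, map_pow, smul_eq_mul]
    exact Finset.sum_congr rfl fun _ _ => Finset.sum_congr rfl fun _ _ => by ring
  rw [circleAverage_congr_sphere hsphere, circleAverage_fun_sum fun m _ => ?_]
  · refine Finset.sum_congr rfl fun m _ => ?_
    rw [circleAverage_fun_sum fun n _ => ?_]
    · exact Finset.sum_congr rfl fun n _ => circleAverage_fun_smul
    · exact ContinuousOn.circleIntegrable' (by fun_prop)
  · exact ContinuousOn.circleIntegrable' (by fun_prop)

end CompositionOperator

section InnerFunction

variable {ψ : ℂ → ℂ} (hanal : DifferentiableOn ℂ ψ (ball 0 1))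
  (hmaps : MapsTo ψ (ball 0 1) (ball 0 1))
include hanal hmaps

lemma tendsto_circleAverage_pow_mul_sub_one (hinner : IsInnerFn ψ) (d k : ℕ) :
    Tendsto (fun r => circleAverage (fun z => ψ z ^ d * (((‖ψ z‖ ^ k : ℝ) : ℂ) - 1)) 0 r)
      (𝓝[<] 1) (𝓝 0) := by
  set G : ℂ → ℂ := fun z => ψ z ^ d * (((‖ψ z‖ ^ k : ℝ) : ℂ) - 1)
  have hGcont : ContinuousOn G (ball 0 1) := by
    have := hanal.continuousOn
    fun_prop
  have hG : ∀ z ∈ ball (0 : ℂ) 1, ‖G z‖ ≤ 1 - ‖ψ z‖ ^ k := fun z hz =>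
    norm_pow_mul_ofReal_pow_sub_one_le (mem_ball_zero_iff.1 (hmaps hz)).le d k
  have hcircle : ∀ r ∈ Ioo (0 : ℝ) 1, ∀ θ, circleMap 0 r θ ∈ ball (0 : ℂ) 1 := fun r hr θ =>
    sphere_subset_ball_one hr (circleMap_mem_sphere' 0 r θ)
  have hint : Tendsto (fun r => ∫ θ in (0 : ℝ)..2 * π, G (circleMap 0 r θ)) (𝓝[<] 1)
      (𝓝 (∫ _ in (0 : ℝ)..2 * π, (0 : ℂ))) := by
    refine intervalIntegral.tendsto_integral_filter_of_dominated_convergence (fun _ => 1)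
      ?_ ?_ intervalIntegrable_const ?_
    · filter_upwards [Ioo_mem_nhdsLT one_pos] with r hr
      exact (hGcont.comp_continuous (continuous_circleMap 0 r) (hcircle r hr)).aestronglyMeasurable
    · filter_upwards [Ioo_mem_nhdsLT one_pos] with r hr
      refine .of_forall fun θ _ => (hG _ (hcircle r hr θ)).trans ?_
      linarith [pow_nonneg (norm_nonneg (ψ (circleMap 0 r θ))) k]
    · filter_upwards [hinner] with θ hθ _
      have hψ : Tendsto (fun r : ℝ => ‖ψ (circleMap 0 r θ)‖) (𝓝[<] 1) (𝓝 1) := by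
        simpa only [circleMap_zero] using hθ
      have hlim := (hψ.pow k).const_sub 1
      rw [one_pow, sub_self] at hlim
      refine squeeze_zero_norm' ?_ hlim
      filter_upwards [Ioo_mem_nhdsLT one_pos] with r hr
      exact hG _ (hcircle r hr θ)
  simpa [circleAverage_def] using hint.const_smul (2 * π)⁻¹

lemma tendsto_circleAverage_pow_mul_conj_pow_of_le (hψ0 : ψ 0 = 0) (hinner : IsInnerFn ψ)
    {m n : ℕ} (hnm : n ≤ m) :
    Tendsto (fun r => circleAverage (fun z => ψ z ^ m * conj (ψ z) ^ n) 0 r) (𝓝[<] 1)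
      (𝓝 (if m = n then 1 else 0)) := by
  have hsplit : (fun r => circleAverage (fun z => ψ z ^ m * conj (ψ z) ^ n) 0 r) =ᶠ[𝓝[<] 1]
      fun r => (if m = n then 1 else 0) +
        circleAverage (fun z => ψ z ^ (m - n) * (((‖ψ z‖ ^ (2 * n) : ℝ) : ℂ) - 1)) 0 r := by
    filter_upwards [Ioo_mem_nhdsLT one_pos] with r hr
    have hψ : ContinuousOn ψ (sphere 0 |r|) := hanal.continuousOn.mono (sphere_subset_ball_one hr)
    have hmean : circleAverage (fun z => ψ z ^ (m - n)) 0 r = if m = n then 1 else 0 := by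
      rw [((hanal.fun_pow _).diffContOnCl_ball (closedBall_subset_ball _)).circleAverage, hψ0]
      · rcases eq_or_lt_of_le hnm with rfl | hlt
        · simp
        · simp [hlt.ne', Nat.sub_ne_zero_of_lt hlt]
      · rw [abs_of_pos hr.1]; exact hr.2
    have herr : ContinuousOn (fun z => ψ z ^ (m - n) * (((‖ψ z‖ ^ (2 * n) : ℝ) : ℂ) - 1))
        (sphere 0 |r|) := by fun_prop
    rw [← hmean, ← circleAverage_fun_add (hψ.fun_pow _).circleIntegrable' herr.circleIntegrable']
    congr 1
    ext z
    rw [pow_mul_conj_pow_of_le hnm]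
    ring
  simpa using (tendsto_const_nhds.add
    (tendsto_circleAverage_pow_mul_sub_one hanal hmaps hinner (m - n) (2 * n))).congr' hsplit.symm

lemma tendsto_circleAverage_pow_mul_conj_pow (hψ0 : ψ 0 = 0) (hinner : IsInnerFn ψ) (m n : ℕ) :
    Tendsto (fun r => circleAverage (fun z => ψ z ^ m * conj (ψ z) ^ n) 0 r) (𝓝[<] 1)
      (𝓝 (if m = n then 1 else 0)) := by
  rcases le_total n m with hnm | hmn
  · exact tendsto_circleAverage_pow_mul_conj_pow_of_le hanal hmaps hψ0 hinner hnm
  · have h := (Complex.continuous_conj.tendsto _).comp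
      (tendsto_circleAverage_pow_mul_conj_pow_of_le hanal hmaps hψ0 hinner hmn)
    simp only [Function.comp_def, ← circleAverage_conj, map_mul, map_pow, Complex.conj_conj,
      apply_ite conj, map_one, map_zero, eq_comm (a := n)] at h
    simpa only [mul_comm (conj _ ^ n)] using h

variable {T : H2 →L[ℂ] H2} (hT : ∀ f : H2, ∀ z ∈ ball (0 : ℂ) 1, evalH2 (T f) z = evalH2 f (ψ z))
include hT

lemma norm_apply_eq_of_coeff_eq_zero (hψ0 : ψ 0 = 0) (hinner : IsInnerFn ψ) {p : H2} {N : ℕ}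
    (hp : ∀ m, N ≤ m → p m = 0) : ‖T p‖ = ‖p‖ := by
  have hlim := (tendsto_finsetSum _ fun m _ => tendsto_finsetSum _ fun n _ =>
    (tendsto_circleAverage_pow_mul_conj_pow hanal hmaps hψ0 hinner m n).const_mul
      (p m * conj (p n))).congr' <| by
    filter_upwards [Ioo_mem_nhdsLT one_pos] with r hr
    exact (circleAverage_evalH2_apply_mul_conj_eq_sum hT hanal.continuousOn hp hr).symm
  have hnorm : ∑ m ∈ Finset.range N, ∑ n ∈ Finset.range N,
      p m * conj (p n) * (if m = n then 1 else 0) = ((‖p‖ ^ 2 : ℝ) : ℂ) := by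
    rw [H2.norm_sq_eq_sum_of_coeff_eq_zero hp, Complex.ofReal_sum]
    refine Finset.sum_congr rfl fun m hm => ?_
    rw [Finset.sum_eq_single_of_mem m hm fun n _ hnm => by simp [Ne.symm hnm]]
    simp [Complex.mul_conj']
  rw [hnorm] at hlim
  have h := tendsto_nhds_unique (H2.tendsto_circleAverage_evalH2_mul_conj (T p)) hlim
  exact (pow_left_inj₀ (norm_nonneg _) (norm_nonneg _) two_ne_zero).1 (Complex.ofReal_injective h)

lemma norm_apply_eq (hψ0 : ψ 0 = 0) (hinner : IsInnerFn ψ) (f : H2) : ‖T f‖ = ‖f‖ := by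
  have hs := (lp.hasSum_single (by norm_num) f).tendsto_sum_nat
  have htrunc : ∀ N, ‖T (∑ i ∈ Finset.range N, lp.single 2 i (f i))‖ =
      ‖∑ i ∈ Finset.range N, lp.single 2 i (f i)‖ := fun N =>
    norm_apply_eq_of_coeff_eq_zero hanal hmaps hT hψ0 hinner fun m hm => by
      rw [lp.coeFn_sum, Finset.sum_apply]
      exact Finset.sum_eq_zero fun i hi => by
        rw [lp.single_apply, Pi.single_eq_of_ne]
        exact ((Finset.mem_range.1 hi).trans_le hm).ne'
  exact tendsto_nhds_unique (((T.continuous.tendsto f).comp hs).norm.congr htrunc) hs.norm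

lemma norm_pow_apply_eq (hψ0 : ψ 0 = 0) (hinner : IsInnerFn ψ) (n : ℕ) (f : H2) :
    ‖(T ^ n) f‖ = ‖f‖ := by
  induction n with
  | zero => rfl
  | succ n ih =>
    rw [pow_succ']
    exact (norm_apply_eq hanal hmaps hT hψ0 hinner _).trans ih

end InnerFunction

theorem stmt6_general (ψ : ℂ → ℂ)
    (hanal : DifferentiableOn ℂ ψ (ball (0:ℂ) 1))
    (hmaps : Set.MapsTo ψ (ball (0:ℂ) 1) (ball (0:ℂ) 1))
    (hψ0 : ψ 0 = 0)
    (hinner : IsInnerFn ψ)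
    (hDW : ∀ z ∈ ball (0:ℂ) 1, Filter.Tendsto (fun n : ℕ => ψ^[n] z) atTop (nhds 0))
    (T : H2 →L[ℂ] H2)
    (hT : ∀ (f : H2), ∀ z ∈ ball (0:ℂ) 1, evalH2 (T f) z = evalH2 f (ψ z)) :
    (⋂ n : ℕ, ⇑(T ^ n) '' {f : H2 | evalH2 f 0 = 0}) = {0} := by
  refine eq_singleton_iff_unique_mem.2 ⟨mem_iInter.2 fun n => ⟨0, by simp, map_zero _⟩,
    fun g hg => H2.eq_zero_of_evalH2_eq_zero fun z hz => ?_⟩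
  have hbound : ∀ n, ‖evalH2 g z‖ ≤ ‖g‖ * ‖ψ^[n] z‖ / (1 - ‖ψ^[n] z‖) := fun n => by
    obtain ⟨f, hf, rfl⟩ := mem_iInter.1 hg n
    rw [norm_pow_apply_eq hanal hmaps hT hψ0 hinner]
    exact norm_evalH2_pow_apply_le hT hmaps hf hz
  have hψn := (hDW z hz).norm
  rw [norm_zero] at hψn
  have hlim : Tendsto (fun n => ‖g‖ * ‖ψ^[n] z‖ / (1 - ‖ψ^[n] z‖)) atTop (𝓝 0) := by
    have hc : ContinuousAt (fun x : ℝ => ‖g‖ * x / (1 - x)) 0 := by fun_prop (disch := norm_num)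
    have h := hc.tendsto.comp hψn
    rwa [mul_zero, zero_div] at h
  exact norm_le_zero_iff.1 (ge_of_tendsto' hlim hbound)

/-- If `ψ` is inner, `ψ 0 = 0`, `ψ` is not an automorphism (so `0` is its Denjoy–Wolff
point and the iterates tend to `0`), and `T = C_ψ` is the composition operator on `H²`,
then `⋂ n, C_ψ^n H²₀ = {0}`. -/
theorem stmt6 (ψ : ℂ → ℂ)
    (hanal : DifferentiableOn ℂ ψ (ball (0:ℂ) 1))
    (hmaps : Set.MapsTo ψ (ball (0:ℂ) 1) (ball (0:ℂ) 1))
    (hψ0 : ψ 0 = 0)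
    (hinner : IsInnerFn ψ)
    (hnotauto : ¬ Set.BijOn ψ (ball (0:ℂ) 1) (ball (0:ℂ) 1))
    (hDW : ∀ z ∈ ball (0:ℂ) 1, Filter.Tendsto (fun n : ℕ => ψ^[n] z) atTop (nhds 0))
    (T : H2 →L[ℂ] H2)
    (hT : ∀ (f : H2), ∀ z ∈ ball (0:ℂ) 1, evalH2 (T f) z = evalH2 f (ψ z)) :
    (⋂ n : ℕ, ⇑(T ^ n) '' {f : H2 | evalH2 f 0 = 0}) = {0} :=
  stmt6_general ψ hanal hmaps hψ0 hinner hDW T hT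
end
end

section
/- Let φ : 𝔻 → 𝔻 be holomorphic and suppose there exists an infinite sequence (z_k) of distinct points in 𝔻 such that each z_k has at least two distinct preimages under φ. Then the closure of the range of the composition operator C_φ : H² → H², f ↦ f∘φ, has infinite codimension; i.e., the orthogonal complement of Im(C_φ) in H² is infinite-dimensional. -/
/-
If `φ w = φ w'`, the reproducing property gives `⟨f ∘ φ, k_w - k_w'⟩ = f (φ w) - f (φ w') = 0`,
so `k_w - k_w'` is orthogonal to the range of `C_φ`. Choosing two preimages `w_k ≠ w_k'` of each
`z_k`, all the points `w_k, w_k'` are distinct, hence their kernels are linearly independent, and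
so are the infinitely many differences `k_{w_k} - k_{w_k'}`.
-/

open Complex Metric Filter MeasureTheory Set
open scoped NNReal ENNReal Topology

noncomputable section

theorem kern_apply {w : ℂ} (hw : ‖w‖ < 1) (n : ℕ) : kern w n = (starRingEnd ℂ) w ^ n := by
  simp only [kern, dif_pos hw]

theorem inner_kern {w : ℂ} (hw : ‖w‖ < 1) (f : H2) : inner ℂ (kern w) f = evalH2 f w := by
  rw [lp.inner_eq_tsum, evalH2]
  congr 1 with n
  rw [kern_apply hw, RCLike.inner_apply, map_pow, Complex.conj_conj]

/-- Coefficientwise, the kernels are the characters `n ↦ (conj w)ⁿ` of `(ℕ, +)`, so this is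
Dedekind's independence of characters. -/
theorem linearIndependent_kern {ι : Type*} {p : ι → ℂ} (hp : ∀ i, ‖p i‖ < 1)
    (hinj : Function.Injective p) : LinearIndependent ℂ (kern ∘ p) := by
  let coeffs : H2 →ₗ[ℂ] (Multiplicative ℕ → ℂ) := LinearMap.pi fun n => lp.evalₗ _ 2 n.toAdd
  have hchar : Function.Injective fun i => powersHom ℂ ((starRingEnd ℂ) (p i)) := by
    intro i j hij
    have h1 := DFunLike.congr_fun hij (Multiplicative.ofAdd 1)
    simp only [powersHom_apply, toAdd_ofAdd, pow_one] at h1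
    exact hinj ((starRingEnd ℂ).injective h1)
  have hcoeffs : coeffs ∘ kern ∘ p = fun i => ⇑(powersHom ℂ ((starRingEnd ℂ) (p i))) := by
    ext i n
    exact kern_apply (hp i) _
  refine LinearIndependent.of_comp coeffs ?_
  rw [hcoeffs]
  exact (linearIndependent_monoidHom (Multiplicative ℕ) ℂ).comp _ hchar

theorem kern_sub_kern_mem_orthogonal {K : Submodule ℂ H2} {w w' : ℂ} (hw : ‖w‖ < 1)
    (hw' : ‖w'‖ < 1) (hK : ∀ g ∈ K, evalH2 g w = evalH2 g w') : kern w - kern w' ∈ Kᗮ := by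
  rw [Submodule.mem_orthogonal']
  intro g hg
  rw [inner_sub_left, inner_kern hw, inner_kern hw', hK g hg, sub_self]

theorem LinearIndependent.sub_of_sumElim {R M ι : Type*} [Ring R] [AddCommGroup M]
    [Module R M] {u v : ι → M} (h : LinearIndependent R (Sum.elim u v)) :
    LinearIndependent R (fun i => u i - v i) := by
  classical
  rw [linearIndependent_iff'] at h ⊢
  intro s c hs i hi
  have := h (s.disjSum s) (Sum.elim c (-c)) (by
    simpa [Finset.sum_disjSum, smul_sub, sub_eq_add_neg, Finset.sum_add_distrib] using hs)
    (.inl i) (by simpa using hi)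
  simpa using this

theorem Function.Injective.sumElim_of_comp_eq {α β γ : Type*} {φ : β → γ} {z : α → γ}
    {w w' : α → β} (hz : Function.Injective z) (hw : ∀ k, φ (w k) = z k)
    (hw' : ∀ k, φ (w' k) = z k) (hne : ∀ k, w k ≠ w' k) : Function.Injective (Sum.elim w w') := by
  refine Function.Injective.sumElim (fun a b h => hz ?_) (fun a b h => hz ?_) fun a b h => ?_
  · rw [← hw, ← hw, h]
  · rw [← hw', ← hw', h]
  · obtain rfl : a = b := hz (by rw [← hw, ← hw', h])
    exact hne a h

theorem Submodule.not_finite_of_linearIndependent {R M ι : Type*} [Ring R] [StrongRankCondition R]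
    [AddCommGroup M] [Module R M] [Infinite ι] {K : Submodule R M} {f : ι → M}
    (hf : LinearIndependent R f) (hK : ∀ i, f i ∈ K) : ¬ Module.Finite R K := fun _ =>
  Module.Finite.not_linearIndependent_of_infinite _
    (LinearIndependent.of_comp K.subtype (v := fun i => (⟨f i, hK i⟩ : K)) hf)

theorem stmt8_general (φ : ℂ → ℂ)
    (z : ℕ → ℂ) (hzinj : Function.Injective z)
    (hpre : ∀ k, ∃ w w' : ℂ, w ∈ ball (0:ℂ) 1 ∧ w' ∈ ball (0:ℂ) 1 ∧ w ≠ w' ∧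
      φ w = z k ∧ φ w' = z k)
    (T : H2 →L[ℂ] H2)
    (hT : ∀ (f : H2), ∀ ζ ∈ ball (0:ℂ) 1, evalH2 (T f) ζ = evalH2 f (φ ζ)) :
    ¬ FiniteDimensional ℂ ↥((LinearMap.range (T : H2 →ₗ[ℂ] H2))ᗮ) := by
  choose w w' hw hw' hne hφw hφw' using hpre
  have hmem : ∀ k, kern (w k) - kern (w' k) ∈ (LinearMap.range (T : H2 →ₗ[ℂ] H2))ᗮ := by
    intro k
    refine kern_sub_kern_mem_orthogonal (mem_ball_zero_iff.mp (hw k))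
      (mem_ball_zero_iff.mp (hw' k)) ?_
    rintro _ ⟨f, rfl⟩
    rw [ContinuousLinearMap.coe_coe, hT f _ (hw k), hT f _ (hw' k), hφw, hφw']
  have hkern : LinearIndependent ℂ (kern ∘ Sum.elim w w') :=
    linearIndependent_kern
      (Sum.forall.2 ⟨fun k => mem_ball_zero_iff.mp (hw k), fun k => mem_ball_zero_iff.mp (hw' k)⟩)
      (hzinj.sumElim_of_comp_eq hφw hφw' hne)
  rw [Sum.comp_elim] at hkern
  have hli : LinearIndependent ℂ (fun k => kern (w k) - kern (w' k)) := hkern.sub_of_sumElim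
  exact Submodule.not_finite_of_linearIndependent hli hmem

/-- If infinitely many distinct points of `𝔻` have at least two distinct `φ`-preimages,
then the range of the composition operator `C_φ` on `H²` has infinite codimension. -/
theorem stmt8 (φ : ℂ → ℂ)
    (hanal : DifferentiableOn ℂ φ (ball (0:ℂ) 1))
    (hmaps : Set.MapsTo φ (ball (0:ℂ) 1) (ball (0:ℂ) 1))
    (z : ℕ → ℂ) (hz : ∀ k, z k ∈ ball (0:ℂ) 1) (hzinj : Function.Injective z)
    (hpre : ∀ k, ∃ w w' : ℂ, w ∈ ball (0:ℂ) 1 ∧ w' ∈ ball (0:ℂ) 1 ∧ w ≠ w' ∧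
      φ w = z k ∧ φ w' = z k)
    (T : H2 →L[ℂ] H2)
    (hT : ∀ (f : H2), ∀ ζ ∈ ball (0:ℂ) 1, evalH2 (T f) ζ = evalH2 f (φ ζ)) :
    ¬ FiniteDimensional ℂ ↥((LinearMap.range (T : H2 →ₗ[ℂ] H2))ᗮ) :=
  stmt8_general φ z hzinj hpre T hT
end
end
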